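/- For every density matrix ρ on the n-partite Hilbert space H, the fidelity of separability equals the optimal average fidelity of separability over pure-state decompositions: F_sep(ρ) = sup over all finite decompositions ρ = ∑_i p_i |ψ_i⟩⟨ψ_i| (p_i ≥ 0, ∑_i p_i = 1, ψ_i unit vectors) of ∑_i p_i · F_sep(|ψ_i⟩⟨ψ_i|). Equivalently, F_sep(ρ) = sup over such decompositions of ∑_i p_i · Λ_max(ψ_i)². -/

import Mathlib

open scoped BigOperators ComplexOrder

noncomputable section

/-- Inner product `⟨u,v⟩ = ∑ x, conj (u x) * v x` on functions `ι → ℂ`. -/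
def inn {ι : Type*} [Fintype ι] (u v : ι → ℂ) : ℂ := ∑ x, star (u x) * v x

/-- Unit vector. -/
def IsUnitVec {ι : Type*} [Fintype ι] (v : ι → ℂ) : Prop := inn v v = 1

/-- Rank-one projector `|v⟩⟨v|`. -/
def proj {ι : Type*} [Fintype ι] (v : ι → ℂ) : Matrix ι ι ℂ :=
  fun x y => v x * star (v y)

/-- Positive semidefinite square root (zero on non-PSD matrices). -/
def psqrt {ι : Type*} [Fintype ι] [DecidableEq ι] (A : Matrix ι ι ℂ) : Matrix ι ι ℂ :=
  open scoped Classical in if h : A.PosSemidef then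
    (h.1.eigenvectorUnitary : Matrix ι ι ℂ) *
      Matrix.diagonal ((↑) ∘ Real.sqrt ∘ h.1.eigenvalues) *
      (star h.1.eigenvectorUnitary : Matrix ι ι ℂ) else 0

/-- Fidelity `F(ρ,σ) = (Tr √(√ρ σ √ρ))²`. -/
def fid {ι : Type*} [Fintype ι] [DecidableEq ι] (ρ σ : Matrix ι ι ℂ) : ℝ :=
  ((psqrt (psqrt ρ * σ * psqrt ρ)).trace.re) ^ 2

/-- Product vector on the `n`-partite Hilbert space. -/
def IsProdVec {n : ℕ} {d : Fin n → ℕ} (v : (∀ j, Fin (d j)) → ℂ) : Prop :=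
  ∃ f : ∀ j, Fin (d j) → ℂ, ∀ x, v x = ∏ j, f j (x j)

/-- Separable state: finite convex combination of projectors onto product unit vectors. -/
def IsSepState {n : ℕ} {d : Fin n → ℕ}
    (σ : Matrix (∀ j, Fin (d j)) (∀ j, Fin (d j)) ℂ) : Prop :=
  ∃ (k : ℕ) (p : Fin k → ℝ) (φ : Fin k → (∀ j, Fin (d j)) → ℂ),
    (∀ i, 0 ≤ p i) ∧ ∑ i, p i = 1 ∧
    (∀ i, IsProdVec (φ i) ∧ IsUnitVec (φ i)) ∧
    σ = ∑ i, (p i : ℂ) • proj (φ i)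

/-- Fidelity of separability. -/
def Fsep {n : ℕ} {d : Fin n → ℕ}
    (ρ : Matrix (∀ j, Fin (d j)) (∀ j, Fin (d j)) ℂ) : ℝ :=
  sSup {x | ∃ σ, IsSepState σ ∧ x = fid ρ σ}

/-- Maximal overlap with product unit vectors. -/
def Lmax {n : ℕ} {d : Fin n → ℕ} (ψ : (∀ j, Fin (d j)) → ℂ) : ℝ :=
  sSup {x | ∃ φ, IsProdVec φ ∧ IsUnitVec φ ∧ x = ‖inn φ ψ‖}

/-- Density matrix: positive semidefinite with unit trace. -/
def IsDensity {ι : Type*} [Fintype ι] [DecidableEq ι] (ρ : Matrix ι ι ℂ) : Prop :=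
  ρ.PosSemidef ∧ ρ.trace = 1

/-!
Write states as ensembles of unnormalised vectors, `ρ = ∑ i, |x i⟩⟨x i|` and
`σ = ∑ i, |y i⟩⟨y i|`, over a common index set. Uhlmann's theorem in ensemble form bounds the
fidelity from both sides: always `(∑ i, |⟨x i, y i⟩|)² ≤ F(ρ, σ)` (factor `x i = √ρ a i` with
`∑ |a i⟩⟨a i| ≤ 1` and apply Cauchy–Schwarz in an eigenbasis of `√ρ σ √ρ`), and every ensemble
of `σ` with at least `dim H` members is matched by an ensemble of `ρ` attaining equality.

For separable `σ = ∑ q i |φ i⟩⟨φ i|`, the matching ensemble `x i = √(p i) ψ i` gives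
`F(ρ, σ) ≤ (∑ √(q i p i) Λ_max(ψ i))² ≤ ∑ p i Λ_max(ψ i)²`. Conversely, for a decomposition
`ρ = ∑ p i |ψ i⟩⟨ψ i|` and nearly optimal product vectors `φ i`, the separable state with weights
`q i ∝ p i |⟨φ i, ψ i⟩|²` has fidelity at least `∑ p i |⟨φ i, ψ i⟩|²`. Finally
`F(|ψ⟩⟨ψ|, σ) = ⟨ψ, σ ψ⟩`, so `F_sep(|ψ⟩⟨ψ|) = Λ_max(ψ)²`.
-/

open scoped Matrix

section InnerProduct

variable {ι : Type*} [Fintype ι]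

lemma star_inn (u v : ι → ℂ) : star (inn u v) = inn v u := by
  simp [inn, star_sum, mul_comm]

lemma inn_smul_left (c : ℂ) (u v : ι → ℂ) : inn (c • u) v = star c * inn u v := by
  simp only [inn, Pi.smul_apply, smul_eq_mul, star_mul', Finset.mul_sum, mul_assoc]

lemma inn_smul_right (c : ℂ) (u v : ι → ℂ) : inn u (c • v) = c * inn u v := by
  simp only [inn, Pi.smul_apply, smul_eq_mul, Finset.mul_sum, mul_left_comm]

lemma inn_zero_right (u : ι → ℂ) : inn u 0 = 0 := by simp [inn]

lemma inn_sum_right {κ : Type*} (s : Finset κ) (u : ι → ℂ) (v : κ → ι → ℂ) :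
    inn u (∑ k ∈ s, v k) = ∑ k ∈ s, inn u (v k) := by
  simp only [inn, Finset.sum_apply, Finset.mul_sum]
  exact Finset.sum_comm

lemma inn_self_eq_sum_norm_sq (v : ι → ℂ) : inn v v = ((∑ x, ‖v x‖ ^ 2 : ℝ) : ℂ) := by
  push_cast
  refine Finset.sum_congr rfl fun x _ => ?_
  rw [← Complex.conj_mul', Complex.star_def]

lemma inn_self_re_nonneg (v : ι → ℂ) : 0 ≤ (inn v v).re := by
  rw [inn_self_eq_sum_norm_sq, Complex.ofReal_re]
  positivity

lemma inn_self_eq_re (v : ι → ℂ) : inn v v = ((inn v v).re : ℂ) := by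
  rw [inn_self_eq_sum_norm_sq, Complex.ofReal_re]

lemma eq_zero_of_inn_self_eq_zero {v : ι → ℂ} (h : inn v v = 0) : v = 0 := by
  rw [inn_self_eq_sum_norm_sq, Complex.ofReal_eq_zero,
    Finset.sum_eq_zero_iff_of_nonneg fun x _ => by positivity] at h
  funext x
  simpa using h x (Finset.mem_univ x)

lemma inn_eq_inner (u v : ι → ℂ) :
    inn u v = inner ℂ (WithLp.toLp 2 u : EuclideanSpace ℂ ι) (WithLp.toLp 2 v) := by
  simp [inn, PiLp.inner_apply, mul_comm]

lemma norm_inn_le_one {u v : ι → ℂ} (hu : IsUnitVec u) (hv : IsUnitVec v) : ‖inn u v‖ ≤ 1 := by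
  have hnorm : ∀ w : ι → ℂ, IsUnitVec w → ‖(WithLp.toLp 2 w : EuclideanSpace ℂ ι)‖ = 1 := by
    intro w hw
    rw [← pow_eq_one_iff_of_nonneg (norm_nonneg _) two_ne_zero, @norm_sq_eq_re_inner ℂ,
      ← inn_eq_inner, hw, RCLike.one_re]
  simpa [inn_eq_inner, hnorm u hu, hnorm v hv] using norm_inner_le_norm (𝕜 := ℂ)
    (WithLp.toLp 2 u : EuclideanSpace ℂ ι) (WithLp.toLp 2 v)

lemma inn_mulVec (M : Matrix ι ι ℂ) (u v : ι → ℂ) :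
    inn u (M *ᵥ v) = inn (Mᴴ *ᵥ u) v := by
  simp only [inn, Matrix.mulVec, dotProduct, Matrix.conjTranspose_apply,
    Finset.mul_sum, Finset.sum_mul, star_sum, star_mul', star_star]
  rw [Finset.sum_comm]
  exact Finset.sum_congr rfl fun x _ => Finset.sum_congr rfl fun y _ => by ring

lemma Matrix.IsHermitian.inn_mulVec {M : Matrix ι ι ℂ} (hM : M.IsHermitian) (u v : ι → ℂ) :
    inn u (M *ᵥ v) = inn (M *ᵥ u) v := by
  rw [_root_.inn_mulVec, hM.eq]

end InnerProduct

section Projector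

variable {ι : Type*} [Fintype ι]

lemma proj_mulVec (v x : ι → ℂ) : proj v *ᵥ x = inn v x • v := by
  funext a
  simp only [Matrix.mulVec, dotProduct, proj, inn, Pi.smul_apply, smul_eq_mul, Finset.sum_mul]
  exact Finset.sum_congr rfl fun y _ => by ring

lemma trace_proj (v : ι → ℂ) : (proj v).trace = inn v v := by
  simp only [Matrix.trace, Matrix.diag, proj, inn]
  exact Finset.sum_congr rfl fun x _ => mul_comm _ _

lemma proj_smul (c : ℂ) (v : ι → ℂ) : proj (c • v) = (c * star c) • proj v := by
  ext x y
  simp only [proj, Pi.smul_apply, smul_eq_mul, star_mul', Matrix.smul_apply]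
  ring

lemma proj_ofReal_smul (t : ℝ) (v : ι → ℂ) : proj ((t : ℂ) • v) = ((t ^ 2 : ℝ) : ℂ) • proj v := by
  rw [proj_smul, Complex.star_def, Complex.conj_ofReal, ← Complex.ofReal_mul, sq]

lemma posSemidef_proj (v : ι → ℂ) : (proj v).PosSemidef :=
  Matrix.posSemidef_vecMulVec_self_star v

lemma posSemidef_sum_proj {κ : Type*} (s : Finset κ) (v : κ → ι → ℂ) :
    (∑ k ∈ s, proj (v k)).PosSemidef :=
  Matrix.posSemidef_sum s fun k _ => posSemidef_proj (v k)

lemma posSemidef_sum_smul_proj {κ : Type*} (s : Finset κ) (c : κ → ℝ) (hc : ∀ k, 0 ≤ c k)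
    (v : κ → ι → ℂ) : (∑ k ∈ s, (c k : ℂ) • proj (v k)).PosSemidef :=
  Matrix.posSemidef_sum s fun k _ =>
    (posSemidef_proj (v k)).smul (Complex.zero_le_real.mpr (hc k))

lemma mul_proj_mul {M : Matrix ι ι ℂ} (hM : M.IsHermitian) (v : ι → ℂ) :
    M * proj v * M = proj (M *ᵥ v) := by
  change M * Matrix.vecMulVec v (star v) * M = Matrix.vecMulVec (M *ᵥ v) (star (M *ᵥ v))
  rw [Matrix.mul_vecMulVec, Matrix.vecMulVec_mul, Matrix.star_mulVec, hM.eq]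

lemma inn_sum_proj_mulVec {κ : Type*} (s : Finset κ) (c : κ → ι → ℂ) (a b : ι → ℂ) :
    inn a ((∑ k ∈ s, proj (c k)) *ᵥ b) = ∑ k ∈ s, inn a (c k) * inn (c k) b := by
  rw [Matrix.sum_mulVec, inn_sum_right]
  refine Finset.sum_congr rfl fun k _ => ?_
  rw [proj_mulVec, inn_smul_right, mul_comm]

lemma inn_sum_smul_proj_mulVec {κ : Type*} (s : Finset κ) (w : κ → ℂ) (c : κ → ι → ℂ)
    (a b : ι → ℂ) :
    inn a ((∑ k ∈ s, w k • proj (c k)) *ᵥ b) = ∑ k ∈ s, w k * (inn a (c k) * inn (c k) b) := by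
  rw [Matrix.sum_mulVec, inn_sum_right]
  refine Finset.sum_congr rfl fun k _ => ?_
  rw [Matrix.smul_mulVec, proj_mulVec, inn_smul_right, inn_smul_right, mul_comm (inn _ b)]

lemma inn_mul_inn_eq_norm_sq (u v : ι → ℂ) : inn u v * inn v u = ((‖inn v u‖ ^ 2 : ℝ) : ℂ) := by
  rw [← star_inn v u, Complex.star_def, Complex.conj_mul']
  push_cast; rfl

lemma norm_inn_comm (u v : ι → ℂ) : ‖inn u v‖ = ‖inn v u‖ := by
  rw [← star_inn v u, norm_star]

lemma inn_sum_proj_mulVec_self {κ : Type*} (s : Finset κ) (c : κ → ι → ℂ) (a : ι → ℂ) :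
    inn a ((∑ k ∈ s, proj (c k)) *ᵥ a) = ((∑ k ∈ s, ‖inn (c k) a‖ ^ 2 : ℝ) : ℂ) := by
  simp [inn_sum_proj_mulVec, inn_mul_inn_eq_norm_sq]

lemma inn_sum_smul_proj_mulVec_self {κ : Type*} (s : Finset κ) (w : κ → ℝ) (c : κ → ι → ℂ)
    (a : ι → ℂ) :
    inn a ((∑ k ∈ s, (w k : ℂ) • proj (c k)) *ᵥ a) =
      ((∑ k ∈ s, w k * ‖inn (c k) a‖ ^ 2 : ℝ) : ℂ) := by
  rw [inn_sum_smul_proj_mulVec]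
  push_cast
  simp only [inn_mul_inn_eq_norm_sq]
  push_cast; rfl

lemma proj_mul_mul_proj (ψ : ι → ℂ) (M : Matrix ι ι ℂ) :
    proj ψ * M * proj ψ = inn ψ (M *ᵥ ψ) • proj ψ := by
  change Matrix.vecMulVec ψ (star ψ) * M * Matrix.vecMulVec ψ (star ψ)
    = inn ψ (M *ᵥ ψ) • Matrix.vecMulVec ψ (star ψ)
  rw [Matrix.vecMulVec_mul, Matrix.vecMulVec_mul_vecMulVec, ← Matrix.dotProduct_mulVec,
    Matrix.vecMulVec_smul]
  rfl

lemma mul_sum_proj_mul {κ : Type*} (s : Finset κ) {M : Matrix ι ι ℂ} (hM : M.IsHermitian)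
    (c : κ → ι → ℂ) : M * (∑ k ∈ s, proj (c k)) * M = ∑ k ∈ s, proj (M *ᵥ c k) := by
  simp only [Finset.mul_sum, Finset.sum_mul, mul_proj_mul hM]

end Projector

section Completeness

variable {ι κ : Type*} [Fintype ι] [Fintype κ] {v : κ → ι → ℂ}

lemma trace_sum_smul_proj (hv : ∀ k, IsUnitVec (v k)) (c : κ → ℝ) :
    (∑ k, (c k : ℂ) • proj (v k)).trace = ((∑ k, c k : ℝ) : ℂ) := by
  simp [Matrix.trace_sum, trace_proj, show ∀ k, inn (v k) (v k) = 1 from hv]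

variable [DecidableEq ι]

lemma inn_eq_sum_of_sum_proj_eq_one (hv : ∑ k, proj (v k) = 1) (a b : ι → ℂ) :
    inn a b = ∑ k, inn a (v k) * inn (v k) b := by
  rw [← inn_sum_proj_mulVec, hv, Matrix.one_mulVec]

lemma eq_sum_of_sum_proj_eq_one (hv : ∑ k, proj (v k) = 1) (b : ι → ℂ) :
    b = ∑ k, inn (v k) b • v k := by
  conv_lhs => rw [← Matrix.one_mulVec b, ← hv, Matrix.sum_mulVec]
  simp only [proj_mulVec]

lemma ext_of_sum_proj_eq_one (hv : ∑ k, proj (v k) = 1) {a b : ι → ℂ}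
    (h : ∀ k, inn (v k) a = inn (v k) b) : a = b := by
  rw [eq_sum_of_sum_proj_eq_one hv a, eq_sum_of_sum_proj_eq_one hv b]
  simp only [h]

lemma sum_norm_inn_sq_of_sum_proj_eq_one (hv : ∑ k, proj (v k) = 1) {u : ι → ℂ}
    (hu : IsUnitVec u) : ∑ k, ‖inn (v k) u‖ ^ 2 = 1 := by
  have h := (inn_eq_sum_of_sum_proj_eq_one hv u u).symm
  rw [show inn u u = 1 from hu] at h
  simp only [inn_mul_inn_eq_norm_sq, ← Complex.ofReal_sum] at h
  exact_mod_cast h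

end Completeness

def IsOrthonormal {κ ι : Type*} [Fintype ι] [DecidableEq κ] (v : κ → ι → ℂ) : Prop :=
  ∀ k l, inn (v k) (v l) = if k = l then 1 else 0

section Orthonormal

variable {ι κ : Type*} [Fintype ι] [DecidableEq κ] {v : κ → ι → ℂ}

lemma IsOrthonormal.isUnitVec (hv : IsOrthonormal v) (k : κ) : IsUnitVec (v k) :=
  (hv k k).trans (if_pos rfl)

lemma IsOrthonormal.inn_sum_smul_proj_mulVec [Fintype κ] (hv : IsOrthonormal v) (w : κ → ℂ) (k : κ)
    (b : ι → ℂ) : inn (v k) ((∑ l, w l • proj (v l)) *ᵥ b) = w k * inn (v k) b := by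
  simp only [_root_.inn_sum_smul_proj_mulVec, hv k]
  simp

lemma IsOrthonormal.sum_smul_proj_mul [Fintype κ] (hv : IsOrthonormal v) (a b : κ → ℂ) :
    (∑ k, a k • proj (v k)) * (∑ k, b k • proj (v k)) = ∑ k, (a k * b k) • proj (v k) := by
  have hterm : ∀ k l, a k • proj (v k) * b l • proj (v l)
      = if k = l then (a k * b l) • proj (v k) else 0 := by
    intro k l
    change a k • Matrix.vecMulVec (v k) (star (v k)) * b l • Matrix.vecMulVec (v l) (star (v l))
      = _
    rw [smul_mul_smul_comm, Matrix.vecMulVec_mul_vecMulVec]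
    have h := hv k l
    simp only [inn] at h
    split_ifs with hkl
    · subst hkl
      rw [show star (v k) ⬝ᵥ v k = 1 by simpa [dotProduct] using h, one_smul]; rfl
    · rw [show star (v k) ⬝ᵥ v l = 0 by simpa [dotProduct, hkl] using h, zero_smul]
      simp
  simp [Finset.sum_mul_sum, hterm]

end Orthonormal

section Spectral

variable {ι : Type*} [Fintype ι] [DecidableEq ι]

lemma mul_diagonal_mul_conjTranspose (U : Matrix ι ι ℂ) (f : ι → ℂ) :
    U * Matrix.diagonal f * Uᴴ = ∑ k, f k • proj (fun x => U x k) := by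
  ext x y
  rw [Matrix.sum_apply, Matrix.mul_apply]
  refine Finset.sum_congr rfl fun k _ => ?_
  rw [Matrix.mul_diagonal, Matrix.conjTranspose_apply, Matrix.smul_apply]
  simp only [proj, smul_eq_mul]
  ring

lemma Matrix.PosSemidef.exists_spectral_decomposition {A : Matrix ι ι ℂ} (hA : A.PosSemidef) :
    ∃ (v : ι → ι → ℂ) (lam : ι → ℝ), IsOrthonormal v ∧ ∑ k, proj (v k) = 1 ∧
      (∀ k, 0 ≤ lam k) ∧ A = ∑ k, (lam k : ℂ) • proj (v k) ∧
      psqrt A = ∑ k, (√(lam k) : ℂ) • proj (v k) := by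
  set U : Matrix ι ι ℂ := (hA.1.eigenvectorUnitary : Matrix ι ι ℂ)
  have hU : U ∈ Matrix.unitaryGroup ι ℂ := hA.1.eigenvectorUnitary.2
  refine ⟨fun k x => U x k, hA.1.eigenvalues, fun k l => ?_, ?_, hA.eigenvalues_nonneg, ?_, ?_⟩
  · have h := congrFun (congrFun (Matrix.mem_unitaryGroup_iff'.mp hU) k) l
    rw [Matrix.mul_apply, Matrix.one_apply] at h
    simpa [inn] using h
  · ext x y
    have h := congrFun (congrFun (Matrix.mem_unitaryGroup_iff.mp hU) x) y
    rw [Matrix.mul_apply] at h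
    simpa [Matrix.sum_apply, proj] using h
  · conv_lhs => rw [hA.1.spectral_theorem]
    rw [Unitary.conjStarAlgAut_apply, Matrix.star_eq_conjTranspose, mul_diagonal_mul_conjTranspose]
    rfl
  · rw [psqrt, dif_pos hA, Matrix.star_eq_conjTranspose, mul_diagonal_mul_conjTranspose]
    rfl

end Spectral

section SquareRoot

variable {ι : Type*} [Fintype ι] [DecidableEq ι]

lemma posSemidef_psqrt (A : Matrix ι ι ℂ) : (psqrt A).PosSemidef := by
  by_cases hA : A.PosSemidef
  · obtain ⟨v, lam, -, -, -, -, hsqrt⟩ := hA.exists_spectral_decomposition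
    rw [hsqrt]
    exact posSemidef_sum_smul_proj _ _ (fun k => Real.sqrt_nonneg _) v
  · rw [psqrt, dif_neg hA]
    exact Matrix.PosSemidef.zero

lemma psqrt_mul_self {A : Matrix ι ι ℂ} (hA : A.PosSemidef) : psqrt A * psqrt A = A := by
  obtain ⟨v, lam, hv, -, hlam, hA, hsqrt⟩ := hA.exists_spectral_decomposition
  rw [hsqrt, hv.sum_smul_proj_mul, hA]
  simp_rw [← Complex.ofReal_mul, Real.mul_self_sqrt (hlam _)]

lemma psqrt_eq_of_mul_self_eq {A B : Matrix ι ι ℂ} (hA : A.PosSemidef) (hB : B.PosSemidef)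
    (h : A * A = B) : psqrt B = A := by
  open scoped MatrixOrder in
  have hc : psqrt B = CFC.sqrt B := by
    rw [CFC.sqrt_eq_cfc, cfc_nnreal_eq_real _ B, hB.1.cfc_eq, Matrix.IsHermitian.cfc,
      Unitary.conjStarAlgAut_apply, psqrt, dif_pos hB]
    congr 3
    funext x
    simp [Real.coe_sqrt, max_eq_left (hB.eigenvalues_nonneg x)]
  open scoped MatrixOrder in
  rw [hc]
  exact CFC.sqrt_unique h hA.nonneg

end SquareRoot

section FidelityLowerBound

variable {ι I : Type*} [Fintype ι] [DecidableEq ι] [Fintype I]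

lemma sum_norm_inn_le_trace_psqrt (a c : I → ι → ℂ)
    (ha : ∀ u, IsUnitVec u → ∑ i, ‖inn (a i) u‖ ^ 2 ≤ 1) :
    ∑ i, ‖inn (a i) (c i)‖ ≤ (psqrt (∑ i, proj (c i))).trace.re := by
  obtain ⟨u, μ, hu, hucomp, hμ, hN, hsqrt⟩ :=
    (posSemidef_sum_proj Finset.univ c).exists_spectral_decomposition
  have hμ_eq : ∀ k, ∑ i, ‖inn (c i) (u k)‖ ^ 2 = μ k := by
    intro k
    have h := inn_sum_proj_mulVec_self Finset.univ c (u k)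
    rw [hN, hu.inn_sum_smul_proj_mulVec, hu.isUnitVec k, mul_one] at h
    exact_mod_cast h.symm
  calc ∑ i, ‖inn (a i) (c i)‖
      = ∑ i, ‖∑ k, inn (a i) (u k) * inn (u k) (c i)‖ := by
        simp only [← inn_eq_sum_of_sum_proj_eq_one hucomp]
    _ ≤ ∑ i, ∑ k, ‖inn (a i) (u k)‖ * ‖inn (c i) (u k)‖ := by
        refine Finset.sum_le_sum fun i _ => (norm_sum_le _ _).trans_eq ?_
        simp only [norm_mul, norm_inn_comm (u _) (c i)]
    _ = ∑ k, ∑ i, ‖inn (a i) (u k)‖ * ‖inn (c i) (u k)‖ := Finset.sum_comm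
    _ ≤ ∑ k, √(∑ i, ‖inn (a i) (u k)‖ ^ 2) * √(μ k) := by
        refine Finset.sum_le_sum fun k _ => ?_
        rw [← hμ_eq]
        exact Real.sum_mul_le_sqrt_mul_sqrt _ _ _
    _ ≤ ∑ k, √(μ k) := by
        refine Finset.sum_le_sum fun k _ => ?_
        have := Real.sqrt_le_one.mpr (ha (u k) (hu.isUnitVec k))
        nlinarith [Real.sqrt_nonneg (μ k), Real.sqrt_nonneg (∑ i, ‖inn (a i) (u k)‖ ^ 2)]
    _ = (psqrt (∑ i, proj (c i))).trace.re := by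
        rw [hsqrt, trace_sum_smul_proj hu.isUnitVec, Complex.ofReal_re]

lemma IsOrthonormal.inn_eq_zero_of_sum_proj_eq {v : ι → ι → ℂ} (hv : IsOrthonormal v)
    {x : I → ι → ℂ} {lam : ι → ℝ} (hx : ∑ i, proj (x i) = ∑ k, (lam k : ℂ) • proj (v k))
    {k : ι} (hk : lam k = 0) {i : I} : inn (v k) (x i) = 0 := by
  have h := inn_sum_proj_mulVec_self Finset.univ x (v k)
  rw [hx, hv.inn_sum_smul_proj_mulVec, hv.isUnitVec k, mul_one, hk, Complex.ofReal_zero,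
    eq_comm, Complex.ofReal_eq_zero,
    Finset.sum_eq_zero_iff_of_nonneg fun _ _ => by positivity] at h
  simpa [norm_inn_comm (x i)] using h i (Finset.mem_univ i)

lemma exists_psqrt_mulVec_eq (x : I → ι → ℂ) :
    ∃ a : I → ι → ℂ, (∀ i, psqrt (∑ i, proj (x i)) *ᵥ a i = x i) ∧
      ∀ u, IsUnitVec u → ∑ i, ‖inn (a i) u‖ ^ 2 ≤ 1 := by
  obtain ⟨v, lam, hv, hvcomp, hlam, hρ, hsqrt⟩ :=
    (posSemidef_sum_proj Finset.univ x).exists_spectral_decomposition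
  -- `g` is the Moore–Penrose pseudo-inverse of `psqrt (∑ i, proj (x i))`, thanks to `0⁻¹ = 0`
  set g := ∑ k, (((√(lam k))⁻¹ : ℝ) : ℂ) • proj (v k)
  have hg : g.IsHermitian :=
    (posSemidef_sum_smul_proj _ _ (fun k => inv_nonneg.2 (Real.sqrt_nonneg _)) v).isHermitian
  refine ⟨fun i => g *ᵥ x i, fun i => ext_of_sum_proj_eq_one hvcomp fun k => ?_, fun u hu => ?_⟩
  · rw [hsqrt, hv.inn_sum_smul_proj_mulVec, hv.inn_sum_smul_proj_mulVec, ← mul_assoc,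
      ← Complex.ofReal_mul]
    by_cases hk : lam k = 0
    · rw [hv.inn_eq_zero_of_sum_proj_eq hρ hk, mul_zero]
    · rw [mul_inv_cancel₀ (Real.sqrt_ne_zero'.2 ((hlam k).lt_of_ne (Ne.symm hk))),
        Complex.ofReal_one, one_mul]
  have hquad : ∑ i, ‖inn (x i) (g *ᵥ u)‖ ^ 2 = ∑ k, lam k * ‖inn (v k) (g *ᵥ u)‖ ^ 2 := by
    have h := inn_sum_proj_mulVec_self Finset.univ x (g *ᵥ u)
    rw [hρ, inn_sum_smul_proj_mulVec_self] at h
    exact_mod_cast h.symm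
  have hcoef : ∀ k, lam k * ((√(lam k))⁻¹) ^ 2 ≤ 1 := by
    intro k
    rw [inv_pow, Real.sq_sqrt (hlam k)]
    by_cases hk : lam k = 0
    · simp [hk]
    · rw [mul_inv_cancel₀ hk]
  calc ∑ i, ‖inn (g *ᵥ x i) u‖ ^ 2 = ∑ k, lam k * ‖inn (v k) (g *ᵥ u)‖ ^ 2 := by
        simp only [← hg.inn_mulVec, hquad]
    _ = ∑ k, lam k * ((√(lam k))⁻¹) ^ 2 * ‖inn (v k) u‖ ^ 2 := by
        refine Finset.sum_congr rfl fun k _ => ?_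
        rw [hv.inn_sum_smul_proj_mulVec, norm_mul, Complex.norm_real, Real.norm_eq_abs,
          abs_of_nonneg (inv_nonneg.2 (Real.sqrt_nonneg _))]
        ring
    _ ≤ ∑ k, ‖inn (v k) u‖ ^ 2 :=
        Finset.sum_le_sum fun k _ => mul_le_of_le_one_left (by positivity) (hcoef k)
    _ = 1 := sum_norm_inn_sq_of_sum_proj_eq_one hvcomp hu

theorem sq_sum_norm_inn_le_fid (x y : I → ι → ℂ) :
    (∑ i, ‖inn (x i) (y i)‖) ^ 2 ≤ fid (∑ i, proj (x i)) (∑ i, proj (y i)) := by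
  obtain ⟨a, hxa, ha⟩ := exists_psqrt_mulVec_eq x
  have hR := (posSemidef_psqrt (∑ i, proj (x i))).isHermitian
  have hxy : ∀ i, inn (x i) (y i) = inn (a i) (psqrt (∑ i, proj (x i)) *ᵥ y i) := fun i => by
    rw [← hxa i, hR.inn_mulVec]
  rw [fid, mul_sum_proj_mul _ hR]
  simp only [hxy]
  exact pow_le_pow_left₀ (Finset.sum_nonneg fun _ _ => norm_nonneg _)
    (sum_norm_inn_le_trace_psqrt a _ ha) 2

end FidelityLowerBound

section FidelityUpperBound

variable {κ J : Type*} [Fintype κ] [DecidableEq κ] [Fintype J]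

lemma exists_isOrthonormal_extension (hcard : Fintype.card κ ≤ Fintype.card J) (T : Set κ)
    (r : κ → J → ℂ) (hr : ∀ k ∈ T, ∀ l ∈ T, inn (r k) (r l) = if k = l then 1 else 0) :
    ∃ s : κ → J → ℂ, IsOrthonormal s ∧ ∀ k ∈ T, s k = r k := by
  let K := κ ⊕ Fin (Fintype.card J - Fintype.card κ)
  have hK : Module.finrank ℂ (EuclideanSpace ℂ J) = Fintype.card K := by
    simp only [finrank_euclideanSpace, K, Fintype.card_sum, Fintype.card_fin]
    omega
  let w : K → EuclideanSpace ℂ J := Sum.elim (fun k => WithLp.toLp 2 (r k)) 0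
  have hw : Orthonormal ℂ ((Sum.inl '' T).domRestrict w) := by
    rw [orthonormal_iff_ite]
    rintro ⟨_, hk'⟩ ⟨_, hl'⟩
    obtain ⟨k, hk, rfl⟩ := hk'
    obtain ⟨l, hl, rfl⟩ := hl'
    change inner ℂ (WithLp.toLp 2 (r k)) (WithLp.toLp 2 (r l)) = _
    rw [← inn_eq_inner, hr k hk l hl]
    by_cases hkl : k = l
    · subst hkl; simp
    · rw [if_neg hkl, if_neg fun h => hkl (Sum.inl_injective (congrArg Subtype.val h))]
  obtain ⟨b, hb⟩ := hw.exists_orthonormalBasis_extension_of_card_eq hK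
  refine ⟨fun k => (b (Sum.inl k)).ofLp, fun k l => ?_, fun k hk => ?_⟩
  · rw [inn_eq_inner, WithLp.toLp_ofLp, WithLp.toLp_ofLp, orthonormal_iff_ite.mp b.orthonormal]
    exact if_congr Sum.inl_injective.eq_iff rfl rfl
  · change (b (Sum.inl k)).ofLp = r k
    rw [hb (Sum.inl k) ⟨k, hk, rfl⟩]
    rfl

lemma exists_isOrthonormal_inn_eq_sqrt (hcard : Fintype.card κ ≤ Fintype.card J)
    (r : κ → J → ℂ) (μ : κ → ℝ) (hr : ∀ k l, inn (r k) (r l) = if k = l then (μ k : ℂ) else 0) :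
    ∃ s : κ → J → ℂ, IsOrthonormal s ∧ ∀ k, inn (s k) (r k) = √(μ k) := by
  have hμ : ∀ k, inn (r k) (r k) = μ k := fun k => by simpa using hr k k
  have hμ_pos : ∀ k, μ k ≠ 0 → 0 < μ k := fun k hk =>
    (by simpa [hμ] using inn_self_re_nonneg (r k) : 0 ≤ μ k).lt_of_ne (Ne.symm hk)
  set r' : κ → J → ℂ := fun k => (((√(μ k))⁻¹ : ℝ) : ℂ) • r k
  have hr'r : ∀ k, μ k ≠ 0 → inn (r' k) (r k) = √(μ k) := fun k hk => by
    rw [inn_smul_left, hμ, Complex.star_def, Complex.conj_ofReal, ← Complex.ofReal_mul,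
      inv_mul_eq_div, Real.div_sqrt]
  have hr' : ∀ k ∈ {k | μ k ≠ 0}, ∀ l ∈ {k | μ k ≠ 0},
      inn (r' k) (r' l) = if k = l then 1 else 0 := by
    intro k hk l _
    rw [inn_smul_right]
    split_ifs with hkl
    · subst hkl
      rw [hr'r k hk, ← Complex.ofReal_mul, inv_mul_cancel₀ (Real.sqrt_pos.2 (hμ_pos k hk)).ne',
        Complex.ofReal_one]
    · simp [r', inn_smul_left, hr, hkl]
  obtain ⟨s, hs, hsr⟩ := exists_isOrthonormal_extension hcard _ r' hr'
  refine ⟨s, hs, fun k => ?_⟩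
  by_cases hk : μ k = 0
  · have : r k = 0 := eq_zero_of_inn_self_eq_zero (by rw [hμ, hk, Complex.ofReal_zero])
    simp [this, hk, inn_zero_right]
  · rw [hsr k hk, hr'r k hk]

lemma IsOrthonormal.sum_proj_sum_smul {ι : Type*} [Fintype ι] {s : κ → J → ℂ}
    (hs : IsOrthonormal s) (A : κ → ι → ℂ) :
    ∑ j, proj (∑ k, star (s k j) • A k) = ∑ k, proj (A k) := by
  ext x y
  have hs' : ∀ k l, ∑ j, star (s k j) * s l j = if k = l then 1 else 0 := hs
  calc (∑ j, proj (∑ k, star (s k j) • A k)) x y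
      = ∑ l, ∑ k, (∑ j, star (s k j) * s l j) * (A k x * star (A l y)) := by
        simp only [Matrix.sum_apply, proj, Finset.sum_apply, Pi.smul_apply, smul_eq_mul, star_sum,
          star_mul', star_star, Finset.mul_sum, Finset.sum_mul]
        conv_lhs => rw [Finset.sum_comm]
        refine Finset.sum_congr rfl fun l _ => ?_
        conv_lhs => rw [Finset.sum_comm]
        exact Finset.sum_congr rfl fun k _ => Finset.sum_congr rfl fun j _ => by ring
    _ = (∑ k, proj (A k)) x y := by
        simp only [hs', ite_mul, one_mul, zero_mul, Finset.sum_ite_eq', Finset.mem_univ, if_true,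
          Matrix.sum_apply, proj]

variable {ι : Type*} [Fintype ι] [DecidableEq ι]

theorem exists_eq_sum_proj_fid_le {ρ : Matrix ι ι ℂ} (hρ : ρ.PosSemidef) (y : J → ι → ℂ)
    (hcard : Fintype.card ι ≤ Fintype.card J) :
    ∃ x : J → ι → ℂ, ρ = ∑ j, proj (x j) ∧
      fid ρ (∑ j, proj (y j)) ≤ (∑ j, ‖inn (y j) (x j)‖) ^ 2 := by
  set R := psqrt ρ
  have hR : R.IsHermitian := (posSemidef_psqrt ρ).isHermitian
  obtain ⟨u, μ, hu, hucomp, hμ, hN, hsqrt⟩ :=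
    (posSemidef_sum_proj Finset.univ fun j => R *ᵥ y j).exists_spectral_decomposition
  set r : ι → J → ℂ := fun k j => inn (R *ᵥ y j) (u k)
  have hr : ∀ k l, inn (r k) (r l) = if k = l then (μ k : ℂ) else 0 := by
    intro k l
    change ∑ j, star (r k j) * r l j = _
    simp only [r, star_inn]
    rw [← inn_sum_proj_mulVec, hN, hu.inn_sum_smul_proj_mulVec, hu k l]
    split_ifs <;> simp
  obtain ⟨s, hs, hsr⟩ := exists_isOrthonormal_inn_eq_sqrt hcard r μ hr
  -- remix the ensemble `R *ᵥ u k` of `ρ` by `s`, aligning it with the ensemble `R *ᵥ y j`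
  refine ⟨fun j => ∑ k, star (s k j) • (R *ᵥ u k), ?_, ?_⟩
  · rw [hs.sum_proj_sum_smul, ← mul_sum_proj_mul _ hR, hucomp, mul_one, psqrt_mul_self hρ]
  have hsum : ∑ j, inn (y j) (∑ k, star (s k j) • (R *ᵥ u k)) = ∑ k, (√(μ k) : ℂ) := by
    simp only [inn_sum_right, inn_smul_right, hR.inn_mulVec (y _), ← hsr]
    exact Finset.sum_comm
  have htr : (psqrt (∑ j, proj (R *ᵥ y j))).trace.re = ∑ k, √(μ k) := by
    rw [hsqrt, trace_sum_smul_proj hu.isUnitVec, Complex.ofReal_re]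
  rw [fid, mul_sum_proj_mul _ hR, htr]
  refine pow_le_pow_left₀ (Finset.sum_nonneg fun _ _ => Real.sqrt_nonneg _) ?_ 2
  calc ∑ k, √(μ k) = (∑ j, inn (y j) (∑ k, star (s k j) • (R *ᵥ u k))).re := by
        rw [hsum, ← Complex.ofReal_sum, Complex.ofReal_re]
    _ ≤ ‖∑ j, inn (y j) (∑ k, star (s k j) • (R *ᵥ u k))‖ := Complex.re_le_norm _
    _ ≤ ∑ j, ‖inn (y j) (∑ k, star (s k j) • (R *ᵥ u k))‖ := norm_sum_le _ _

end FidelityUpperBound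

section PureState

variable {ι : Type*} [Fintype ι] [DecidableEq ι]

lemma fid_proj_left {ψ : ι → ℂ} (hψ : IsUnitVec ψ) {K : Type*} [Fintype K] (q : K → ℝ)
    (hq : ∀ i, 0 ≤ q i) (φ : K → ι → ℂ) :
    fid (proj ψ) (∑ i, (q i : ℂ) • proj (φ i)) = ∑ i, q i * ‖inn (φ i) ψ‖ ^ 2 := by
  set S := ∑ i, q i * ‖inn (φ i) ψ‖ ^ 2
  have hS : 0 ≤ S := Finset.sum_nonneg fun i _ => mul_nonneg (hq i) (by positivity)
  have hψψ : proj ψ * proj ψ = proj ψ := by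
    simpa [show inn ψ ψ = 1 from hψ] using proj_mul_mul_proj ψ 1
  have hsmul : ∀ t : ℝ, 0 ≤ t → ((t : ℂ) • proj ψ).PosSemidef := fun t ht =>
    (posSemidef_proj ψ).smul (Complex.zero_le_real.mpr ht)
  have h1 : psqrt (proj ψ) = proj ψ :=
    psqrt_eq_of_mul_self_eq (posSemidef_proj ψ) (posSemidef_proj ψ) hψψ
  have h2 : psqrt ((S : ℂ) • proj ψ) = (√S : ℂ) • proj ψ := by
    refine psqrt_eq_of_mul_self_eq (hsmul _ (Real.sqrt_nonneg S)) (hsmul S hS) ?_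
    rw [smul_mul_smul_comm, hψψ, ← Complex.ofReal_mul, Real.mul_self_sqrt hS]
  rw [fid, h1, proj_mul_mul_proj, inn_sum_smul_proj_mulVec_self, h2, Matrix.trace_smul, trace_proj,
    show inn ψ ψ = 1 from hψ, smul_eq_mul, mul_one, Complex.ofReal_re, Real.sq_sqrt hS]

end PureState

section ProductVectors

variable {n : ℕ} {d : Fin n → ℕ}

lemma exists_isProdVec_isUnitVec [Nonempty (∀ j, Fin (d j))] :
    ∃ φ : (∀ j, Fin (d j)) → ℂ, IsProdVec φ ∧ IsUnitVec φ := by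
  classical
  obtain ⟨x₀⟩ := ‹Nonempty (∀ j, Fin (d j))›
  refine ⟨Pi.single x₀ 1, ⟨fun j => Pi.single (x₀ j) 1, fun x => ?_⟩, ?_⟩
  · by_cases hx : x = x₀
    · simp [hx]
    · obtain ⟨j, hj⟩ := Function.ne_iff.mp hx
      rw [Pi.single_eq_of_ne hx, eq_comm]
      exact Finset.prod_eq_zero (Finset.mem_univ j) (Pi.single_eq_of_ne hj _)
  · simp [IsUnitVec, inn, Pi.single_apply]

lemma isSepState_proj {φ : (∀ j, Fin (d j)) → ℂ} (hφ : IsProdVec φ) (hφ' : IsUnitVec φ) :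
    IsSepState (proj φ) :=
  ⟨1, fun _ => 1, fun _ => φ, fun _ => zero_le_one, by simp, fun _ => ⟨hφ, hφ'⟩, by simp⟩

variable {ψ : (∀ j, Fin (d j)) → ℂ}

lemma norm_inn_le_Lmax (hψ : IsUnitVec ψ) {φ : (∀ j, Fin (d j)) → ℂ} (hφ : IsProdVec φ)
    (hφ' : IsUnitVec φ) : ‖inn φ ψ‖ ≤ Lmax ψ :=
  le_csSup ⟨1, by rintro _ ⟨φ, -, hφ', rfl⟩; exact norm_inn_le_one hφ' hψ⟩ ⟨φ, hφ, hφ', rfl⟩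

lemma Lmax_nonneg : 0 ≤ Lmax ψ :=
  Real.sSup_nonneg (by rintro _ ⟨φ, -, -, rfl⟩; exact norm_nonneg _)

lemma Lmax_le_one (hψ : IsUnitVec ψ) : Lmax ψ ≤ 1 :=
  Real.sSup_le (by rintro _ ⟨φ, -, hφ', rfl⟩; exact norm_inn_le_one hφ' hψ) zero_le_one

lemma exists_Lmax_sq_sub_lt [Nonempty (∀ j, Fin (d j))] (hψ : IsUnitVec ψ) {ε : ℝ} (hε : 0 < ε) :
    ∃ φ, IsProdVec φ ∧ IsUnitVec φ ∧ Lmax ψ ^ 2 - ε < ‖inn φ ψ‖ ^ 2 := by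
  obtain ⟨φ₀, hφ₀, hφ₀'⟩ := exists_isProdVec_isUnitVec (d := d)
  have hne : {x | ∃ φ, IsProdVec φ ∧ IsUnitVec φ ∧ x = ‖inn φ ψ‖}.Nonempty :=
    ⟨_, φ₀, hφ₀, hφ₀', rfl⟩
  obtain ⟨_, ⟨φ, hφ, hφ', rfl⟩, hlt⟩ :=
    exists_lt_of_lt_csSup hne (sub_lt_self (Lmax ψ) (half_pos hε))
  refine ⟨φ, hφ, hφ', ?_⟩
  nlinarith [norm_inn_le_Lmax hψ hφ hφ', Lmax_le_one hψ, norm_nonneg (inn φ ψ),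
    Lmax_nonneg (ψ := ψ)]

lemma Fsep_proj [Nonempty (∀ j, Fin (d j))] (hψ : IsUnitVec ψ) : Fsep (proj ψ) = Lmax ψ ^ 2 := by
  have hfid : ∀ σ, IsSepState σ → fid (proj ψ) σ ≤ Lmax ψ ^ 2 := by
    rintro _ ⟨m, q, φ, hq, hq1, hφ, rfl⟩
    rw [fid_proj_left hψ q hq φ]
    calc ∑ i, q i * ‖inn (φ i) ψ‖ ^ 2 ≤ ∑ i, q i * Lmax ψ ^ 2 :=
          Finset.sum_le_sum fun i _ => mul_le_mul_of_nonneg_left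
            (pow_le_pow_left₀ (norm_nonneg _) (norm_inn_le_Lmax hψ (hφ i).1 (hφ i).2) 2) (hq i)
      _ = Lmax ψ ^ 2 := by rw [← Finset.sum_mul, hq1, one_mul]
  have hpure : ∀ φ, IsProdVec φ → IsUnitVec φ → fid (proj ψ) (proj φ) = ‖inn φ ψ‖ ^ 2 := by
    intro φ _ _
    simpa using fid_proj_left hψ (fun _ : Unit => 1) (fun _ => zero_le_one) (fun _ => φ)
  obtain ⟨φ₀, hφ₀, hφ₀'⟩ := exists_isProdVec_isUnitVec (d := d)
  refine le_antisymm (csSup_le ⟨_, _, isSepState_proj hφ₀ hφ₀', rfl⟩ ?_) ?_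
  · rintro _ ⟨σ, hσ, rfl⟩
    exact hfid σ hσ
  · refine le_of_forall_pos_lt_add fun ε hε => ?_
    obtain ⟨φ, hφ, hφ', hlt⟩ := exists_Lmax_sq_sub_lt hψ hε
    have hbdd : BddAbove {x | ∃ σ, IsSepState σ ∧ x = fid (proj ψ) σ} :=
      ⟨_, by rintro _ ⟨σ, hσ, rfl⟩; exact hfid σ hσ⟩
    have hle : fid (proj ψ) (proj φ) ≤ Fsep (proj ψ) :=
      le_csSup hbdd ⟨_, isSepState_proj hφ hφ', rfl⟩
    linarith [hpure φ hφ hφ']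

end ProductVectors

def decompositionAverages {ι : Type*} [Fintype ι] (ρ : Matrix ι ι ℂ) (f : (ι → ℂ) → ℝ) :
    Set ℝ :=
  {x | ∃ (k : ℕ) (p : Fin k → ℝ) (ψs : Fin k → ι → ℂ),
    (∀ i, 0 ≤ p i) ∧ ∑ i, p i = 1 ∧ (∀ i, IsUnitVec (ψs i)) ∧
    ρ = ∑ i, (p i : ℂ) • proj (ψs i) ∧ x = ∑ i, p i * f (ψs i)}

section Decompositions

variable {ι : Type*} [Fintype ι] {ρ : Matrix ι ι ℂ} {f : (ι → ℂ) → ℝ}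

lemma decompositionAverages_congr {g : (ι → ℂ) → ℝ} (h : ∀ ψ, IsUnitVec ψ → f ψ = g ψ) :
    decompositionAverages ρ f = decompositionAverages ρ g := by
  ext x
  constructor <;> rintro ⟨k, p, ψs, hp, hp1, hψ, hρ, rfl⟩ <;>
    exact ⟨k, p, ψs, hp, hp1, hψ, hρ, Finset.sum_congr rfl fun i _ => by rw [h _ (hψ i)]⟩

lemma sum_mul_mem_decompositionAverages {J : Type*} [Fintype J] {p : J → ℝ}
    {ψ : J → ι → ℂ} (hp : ∀ j, 0 ≤ p j) (hp1 : ∑ j, p j = 1) (hψ : ∀ j, IsUnitVec (ψ j))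
    (hρ : ρ = ∑ j, (p j : ℂ) • proj (ψ j)) :
    ∑ j, p j * f (ψ j) ∈ decompositionAverages ρ f := by
  let e := (Fintype.equivFin J).symm
  refine ⟨Fintype.card J, p ∘ e, ψ ∘ e, fun i => hp _, ?_, fun i => hψ _, ?_, ?_⟩
  · rw [← hp1]; exact e.sum_comp p
  · rw [hρ]; exact (e.sum_comp fun j => (p j : ℂ) • proj (ψ j)).symm
  · exact (e.sum_comp fun j => p j * f (ψ j)).symm

lemma bddAbove_decompositionAverages (hf : ∀ ψ, IsUnitVec ψ → f ψ ≤ 1) :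
    BddAbove (decompositionAverages ρ f) := by
  refine ⟨1, ?_⟩
  rintro _ ⟨k, p, ψs, hp, hp1, hψ, -, rfl⟩
  calc ∑ i, p i * f (ψs i) ≤ ∑ i, p i * 1 :=
        Finset.sum_le_sum fun i _ => mul_le_mul_of_nonneg_left (hf _ (hψ i)) (hp i)
    _ = 1 := by simp [hp1]

variable [DecidableEq ι]

lemma IsDensity.decompositionAverages_nonempty (hρ : IsDensity ρ) :
    (decompositionAverages ρ f).Nonempty := by
  obtain ⟨v, lam, hv, -, hlam, hρv, -⟩ := hρ.1.exists_spectral_decomposition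
  have hlam1 : ∑ k, lam k = 1 := by
    have h := hρ.2
    rw [hρv, trace_sum_smul_proj hv.isUnitVec] at h
    exact_mod_cast h
  exact ⟨_, sum_mul_mem_decompositionAverages hlam hlam1 hv.isUnitVec hρv⟩

lemma IsDensity.nonempty (hρ : IsDensity ρ) : Nonempty ι := by
  by_contra h
  rw [not_nonempty_iff] at h
  simpa [Matrix.trace] using hρ.2

end Decompositions

lemma exists_eq_sqrt_smul_isUnitVec {ι : Type*} [Fintype ι] {ψ₀ : ι → ℂ} (hψ₀ : IsUnitVec ψ₀)
    (x : ι → ℂ) : ∃ (p : ℝ) (ψ : ι → ℂ), 0 ≤ p ∧ IsUnitVec ψ ∧ x = (√p : ℂ) • ψ := by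
  set t := (inn x x).re
  have ht0 : 0 ≤ t := inn_self_re_nonneg x
  by_cases ht : t = 0
  · refine ⟨0, ψ₀, le_rfl, hψ₀, ?_⟩
    rw [Real.sqrt_zero, Complex.ofReal_zero, zero_smul]
    exact eq_zero_of_inn_self_eq_zero (by rw [inn_self_eq_re]; exact_mod_cast ht)
  have hs : √t ≠ 0 := Real.sqrt_ne_zero'.2 (ht0.lt_of_ne (Ne.symm ht))
  refine ⟨t, (((√t)⁻¹ : ℝ) : ℂ) • x, ht0, ?_, ?_⟩
  · rw [IsUnitVec, inn_smul_left, inn_smul_right, inn_self_eq_re, Complex.star_def,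
      Complex.conj_ofReal, ← Complex.ofReal_mul, ← Complex.ofReal_mul, ← mul_assoc, ← mul_inv,
      Real.mul_self_sqrt ht0, inv_mul_cancel₀ ht, Complex.ofReal_one]
  · rw [smul_smul, ← Complex.ofReal_mul, mul_inv_cancel₀ hs, Complex.ofReal_one, one_smul]

section Separability

variable {n : ℕ} {d : Fin n → ℕ} {ρ : Matrix (∀ j, Fin (d j)) (∀ j, Fin (d j)) ℂ}

lemma IsSepState.exists_eq_sum_proj_sqrt_smul [Nonempty (∀ j, Fin (d j))]
    {σ : Matrix (∀ j, Fin (d j)) (∀ j, Fin (d j)) ℂ} (hσ : IsSepState σ) :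
    ∃ (m : ℕ) (q : Fin m ⊕ (∀ j, Fin (d j)) → ℝ)
      (φ : Fin m ⊕ (∀ j, Fin (d j)) → (∀ j, Fin (d j)) → ℂ),
      (∀ j, 0 ≤ q j) ∧ ∑ j, q j = 1 ∧ (∀ j, IsProdVec (φ j) ∧ IsUnitVec (φ j)) ∧
      σ = ∑ j, proj ((√(q j) : ℂ) • φ j) := by
  obtain ⟨φ₀, hφ₀, hφ₀'⟩ := exists_isProdVec_isUnitVec (d := d)
  obtain ⟨m, q, φ, hq, hq1, hφ, rfl⟩ := hσ
  refine ⟨m, Sum.elim q 0, Sum.elim φ fun _ => φ₀, ?_, ?_, ?_, ?_⟩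
  · rintro (j | j); exacts [hq j, le_rfl]
  · simp [Fintype.sum_sum_type, hq1]
  · rintro (j | j); exacts [hφ j, ⟨hφ₀, hφ₀'⟩]
  · simp only [Fintype.sum_sum_type, Sum.elim_inl, Sum.elim_inr, proj_ofReal_smul,
      Real.sq_sqrt (hq _)]
    simp

theorem IsDensity.exists_mem_decompositionAverages_fid_le (hρ : IsDensity ρ)
    {σ : Matrix (∀ j, Fin (d j)) (∀ j, Fin (d j)) ℂ} (hσ : IsSepState σ) :
    ∃ y ∈ decompositionAverages ρ (fun ψ => Lmax ψ ^ 2), fid ρ σ ≤ y := by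
  have := hρ.nonempty
  obtain ⟨φ₀, -, hφ₀⟩ := exists_isProdVec_isUnitVec (d := d)
  obtain ⟨m, q, φ, hq, hq1, hφ, rfl⟩ := hσ.exists_eq_sum_proj_sqrt_smul
  obtain ⟨x, hρx, hfid⟩ := exists_eq_sum_proj_fid_le hρ.1 (fun j => (√(q j) : ℂ) • φ j)
    (by simp [Fintype.card_sum])
  choose p ψ hp hψ hxψ using fun j => exists_eq_sqrt_smul_isUnitVec hφ₀ (x j)
  have hρψ : ρ = ∑ j, (p j : ℂ) • proj (ψ j) := by
    conv_lhs => rw [hρx]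
    simp only [hxψ, proj_ofReal_smul, Real.sq_sqrt (hp _)]
  have hp1 : ∑ j, p j = 1 := by
    have h := hρ.2
    rw [hρψ, trace_sum_smul_proj hψ] at h
    exact_mod_cast h
  refine ⟨_, sum_mul_mem_decompositionAverages hp hp1 hψ hρψ, ?_⟩
  calc fid ρ (∑ j, proj ((√(q j) : ℂ) • φ j))
      ≤ (∑ j, ‖inn ((√(q j) : ℂ) • φ j) (x j)‖) ^ 2 := hfid
    _ ≤ (∑ j, √(q j) * (√(p j) * Lmax (ψ j))) ^ 2 := by
        refine pow_le_pow_left₀ (Finset.sum_nonneg fun _ _ => norm_nonneg _)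
          (Finset.sum_le_sum fun j _ => ?_) 2
        rw [hxψ j, inn_smul_left, inn_smul_right, norm_mul, norm_mul, norm_star,
          Complex.norm_real, Complex.norm_real, Real.norm_of_nonneg (Real.sqrt_nonneg _),
          Real.norm_of_nonneg (Real.sqrt_nonneg _)]
        gcongr
        exact norm_inn_le_Lmax (hψ j) (hφ j).1 (hφ j).2
    _ ≤ (∑ j, √(q j) ^ 2) * ∑ j, (√(p j) * Lmax (ψ j)) ^ 2 :=
        Finset.sum_mul_sq_le_sq_mul_sq _ _ _
    _ = ∑ j, p j * Lmax (ψ j) ^ 2 := by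
        simp only [mul_pow, Real.sq_sqrt (hq _), Real.sq_sqrt (hp _), hq1, one_mul]

theorem sum_mul_sq_norm_inn_le_Fsep
    (hbdd : BddAbove {x | ∃ σ, IsSepState σ ∧ x = fid ρ σ}) {k : ℕ} {p : Fin k → ℝ}
    (hp : ∀ i, 0 ≤ p i) {ψ : Fin k → (∀ j, Fin (d j)) → ℂ}
    (hρ : ρ = ∑ i, (p i : ℂ) • proj (ψ i)) {φ : Fin k → (∀ j, Fin (d j)) → ℂ}
    (hφ : ∀ i, IsProdVec (φ i) ∧ IsUnitVec (φ i)) :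
    ∑ i, p i * ‖inn (φ i) (ψ i)‖ ^ 2 ≤ Fsep ρ := by
  set S := ∑ i, p i * ‖inn (φ i) (ψ i)‖ ^ 2
  have hS : 0 ≤ S := Finset.sum_nonneg fun i _ => mul_nonneg (hp i) (by positivity)
  rcases hS.eq_or_lt with hS0 | hSpos
  · rw [← hS0]
    exact Real.sSup_nonneg (by rintro _ ⟨σ, -, rfl⟩; exact sq_nonneg _)
  set t : Fin k → ℝ := fun i => √(p i) * ‖inn (φ i) (ψ i)‖ / √S
  have ht : ∀ i, 0 ≤ t i := fun i => by positivity
  have hq1 : ∑ i, t i ^ 2 = 1 := by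
    simp only [t, div_pow, mul_pow, Real.sq_sqrt (hp _), Real.sq_sqrt hS, ← Finset.sum_div]
    exact div_self hSpos.ne'
  have hsep : IsSepState (∑ i, proj ((t i : ℂ) • φ i)) :=
    ⟨k, fun i => t i ^ 2, φ, fun i => sq_nonneg _, hq1, hφ, by simp only [proj_ofReal_smul]⟩
  have hρx : ρ = ∑ i, proj ((√(p i) : ℂ) • ψ i) := by
    simp only [hρ, proj_ofReal_smul, Real.sq_sqrt (hp _)]
  have hsum : ∑ i, ‖inn ((√(p i) : ℂ) • ψ i) ((t i : ℂ) • φ i)‖ = √S := by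
    calc ∑ i, ‖inn ((√(p i) : ℂ) • ψ i) ((t i : ℂ) • φ i)‖
        = ∑ i, p i * ‖inn (φ i) (ψ i)‖ ^ 2 / √S := by
          refine Finset.sum_congr rfl fun i _ => ?_
          rw [inn_smul_left, inn_smul_right, norm_mul, norm_mul, norm_star, Complex.norm_real,
            Complex.norm_real, Real.norm_of_nonneg (Real.sqrt_nonneg _), Real.norm_of_nonneg (ht i),
            norm_inn_comm (ψ i)]
          linear_combination (‖inn (φ i) (ψ i)‖ ^ 2 / √S) * Real.mul_self_sqrt (hp i)
      _ = √S := by rw [← Finset.sum_div, Real.div_sqrt]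
  calc S = (∑ i, ‖inn ((√(p i) : ℂ) • ψ i) ((t i : ℂ) • φ i)‖) ^ 2 := by
        rw [hsum, Real.sq_sqrt hS]
    _ ≤ fid ρ (∑ i, proj ((t i : ℂ) • φ i)) := hρx ▸ sq_sum_norm_inn_le_fid _ _
    _ ≤ Fsep ρ := le_csSup hbdd ⟨_, hsep, rfl⟩

theorem IsDensity.Fsep_eq_sSup_decompositionAverages (hρ : IsDensity ρ) :
    Fsep ρ = sSup (decompositionAverages ρ fun ψ => Lmax ψ ^ 2) := by
  have := hρ.nonempty
  obtain ⟨φ₀, hφ₀, hφ₀'⟩ := exists_isProdVec_isUnitVec (d := d)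
  have hD : BddAbove (decompositionAverages ρ fun ψ => Lmax ψ ^ 2) :=
    bddAbove_decompositionAverages fun ψ hψ => pow_le_one₀ Lmax_nonneg (Lmax_le_one hψ)
  have hfid : ∀ σ, IsSepState σ →
      fid ρ σ ≤ sSup (decompositionAverages ρ fun ψ => Lmax ψ ^ 2) := fun σ hσ => by
    obtain ⟨y, hy, hle⟩ := hρ.exists_mem_decompositionAverages_fid_le hσ
    exact hle.trans (le_csSup hD hy)
  have hF : BddAbove {x | ∃ σ, IsSepState σ ∧ x = fid ρ σ} :=
    ⟨_, by rintro _ ⟨σ, hσ, rfl⟩; exact hfid σ hσ⟩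
  refine le_antisymm (csSup_le ⟨_, _, isSepState_proj hφ₀ hφ₀', rfl⟩ ?_)
    (csSup_le hρ.decompositionAverages_nonempty ?_)
  · rintro _ ⟨σ, hσ, rfl⟩
    exact hfid σ hσ
  · rintro _ ⟨k, p, ψ, hp, hp1, hψ, hρψ, rfl⟩
    refine le_of_forall_pos_le_add fun ε hε => ?_
    choose φ hφ hφ' hlt using fun i => exists_Lmax_sq_sub_lt (hψ i) hε
    calc ∑ i, p i * Lmax (ψ i) ^ 2 = ∑ i, p i * (Lmax (ψ i) ^ 2 - ε) + ε := by
          simp [mul_sub, Finset.sum_sub_distrib, ← Finset.sum_mul, hp1]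
      _ ≤ ∑ i, p i * ‖inn (φ i) (ψ i)‖ ^ 2 + ε := by
          gcongr with i
          · exact hp i
          · exact (hlt i).le
      _ ≤ Fsep ρ + ε := by
          gcongr
          exact sum_mul_sq_norm_inn_le_Fsep hF hp hρψ fun i => ⟨hφ i, hφ' i⟩

end Separability

theorem fsep_eq_sup_decompositions_general (n : ℕ) (d : Fin n → ℕ)
    (ρ : Matrix (∀ j, Fin (d j)) (∀ j, Fin (d j)) ℂ) (hρ : IsDensity ρ) :
    Fsep ρ = sSup {x | ∃ (k : ℕ) (p : Fin k → ℝ) (ψs : Fin k → (∀ j, Fin (d j)) → ℂ),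
        (∀ i, 0 ≤ p i) ∧ ∑ i, p i = 1 ∧ (∀ i, IsUnitVec (ψs i)) ∧
        ρ = ∑ i, (p i : ℂ) • proj (ψs i) ∧
        x = ∑ i, p i * Fsep (proj (ψs i))} ∧
    Fsep ρ = sSup {x | ∃ (k : ℕ) (p : Fin k → ℝ) (ψs : Fin k → (∀ j, Fin (d j)) → ℂ),
        (∀ i, 0 ≤ p i) ∧ ∑ i, p i = 1 ∧ (∀ i, IsUnitVec (ψs i)) ∧
        ρ = ∑ i, (p i : ℂ) • proj (ψs i) ∧
        x = ∑ i, p i * (Lmax (ψs i)) ^ 2} := by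
  have := hρ.nonempty
  have hsup := hρ.Fsep_eq_sSup_decompositionAverages
  refine ⟨?_, hsup⟩
  rw [hsup]
  exact congrArg sSup (decompositionAverages_congr fun ψ hψ => (Fsep_proj hψ).symm)

/-- the fidelity of separability equals the optimal average fidelity of
separability over all pure-state decompositions of `ρ`; equivalently, the optimal
average of `Λ_max(ψ_i)²`. -/
theorem fsep_eq_sup_decompositions (n : ℕ) (hn : 1 ≤ n) (d : Fin n → ℕ)
    (ρ : Matrix (∀ j, Fin (d j)) (∀ j, Fin (d j)) ℂ) (hρ : IsDensity ρ) :
    Fsep ρ = sSup {x | ∃ (k : ℕ) (p : Fin k → ℝ) (ψs : Fin k → (∀ j, Fin (d j)) → ℂ),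
        (∀ i, 0 ≤ p i) ∧ ∑ i, p i = 1 ∧ (∀ i, IsUnitVec (ψs i)) ∧
        ρ = ∑ i, (p i : ℂ) • proj (ψs i) ∧
        x = ∑ i, p i * Fsep (proj (ψs i))} ∧
    Fsep ρ = sSup {x | ∃ (k : ℕ) (p : Fin k → ℝ) (ψs : Fin k → (∀ j, Fin (d j)) → ℂ),
        (∀ i, 0 ≤ p i) ∧ ∑ i, p i = 1 ∧ (∀ i, IsUnitVec (ψs i)) ∧
        ρ = ∑ i, (p i : ℂ) • proj (ψs i) ∧
        x = ∑ i, p i * (Lmax (ψs i)) ^ 2} :=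
  fsep_eq_sup_decompositions_general n d ρ hρ
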